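/- Under the assumptions of the previous theorem, if additionally rank(Df(x)) = k - 1 for all x in P_int, then the edge P_E is contained in P_0, the set of Pareto critical points all of whose KKT multipliers have at least one zero component. -/

import Mathlib

noncomputable def grad (n : ℕ) (g : (Fin n → ℝ) → ℝ) (x : Fin n → ℝ) : Fin n → ℝ :=
  fun j => fderiv ℝ g x (Pi.single j 1)

noncomputable def Ftilde (n K : ℕ) (f : Fin (K + 1) → (Fin n → ℝ) → ℝ)
    (p : (Fin n → ℝ) × (Fin K → ℝ)) : Fin n → ℝ :=
  (∑ i : Fin K, p.2 i •
      (grad n (f i.castSucc) p.1 - grad n (f (Fin.last K)) p.1))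
    + grad n (f (Fin.last K)) p.1

def openSimplex (K : ℕ) : Set (Fin K → ℝ) := {α | (∀ i, 0 < α i) ∧ ∑ i, α i < 1}

def closedSimplex (K : ℕ) : Set (Fin K → ℝ) := {α | (∀ i, 0 ≤ α i) ∧ ∑ i, α i ≤ 1}

noncomputable def DxFtilde (n K : ℕ) (f : Fin (K + 1) → (Fin n → ℝ) → ℝ)
    (p : (Fin n → ℝ) × (Fin K → ℝ)) : (Fin n → ℝ) →L[ℝ] (Fin n → ℝ) :=
  fderiv ℝ (fun x => Ftilde n K f (x, p.2)) p.1

def ParetoCritical (n K : ℕ) (f : Fin (K + 1) → (Fin n → ℝ) → ℝ) : Set (Fin n → ℝ) :=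
  {x | ∃ α ∈ closedSimplex K, Ftilde n K f (x, α) = 0}

def ParetoCriticalInt (n K : ℕ) (f : Fin (K + 1) → (Fin n → ℝ) → ℝ) : Set (Fin n → ℝ) :=
  {x | ∃ α ∈ openSimplex K, Ftilde n K f (x, α) = 0}

noncomputable def Jac (n k : ℕ) (f : Fin k → (Fin n → ℝ) → ℝ) (x : Fin n → ℝ) :
    Matrix (Fin k) (Fin n) ℝ :=
  Matrix.of fun i j => fderiv ℝ (f i) x (Pi.single j 1)

def Tan {E : Type*} [NormedAddCommGroup E] [NormedSpace ℝ E] (Y : Set E) (x : E) :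
    Set E :=
  {v | v = 0 ∨ ∃ u : ℕ → E, (∀ i, u i ≠ 0) ∧
    Filter.Tendsto u Filter.atTop (nhds 0) ∧ (∀ i, x + u i ∈ Y) ∧
    Filter.Tendsto (fun i => ‖u i‖⁻¹ • u i) Filter.atTop (nhds (‖v‖⁻¹ • v))}

def ParetoEdge (n K : ℕ) (f : Fin (K + 1) → (Fin n → ℝ) → ℝ) : Set (Fin n → ℝ) :=
  {x ∈ ParetoCritical n K f |
    Tan (ParetoCriticalInt n K f) x ≠ Neg.neg '' Tan (ParetoCriticalInt n K f) x}

/-!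
Let `x ∈ P_int` with weight `α₀`. The implicit function theorem applied to `F̃(y, α) = 0` at
`(x, α₀)` gives a `C¹` map `ψ` with `ψ α₀ = x` whose values near `α₀` lie in `P_int`. Since
`α ↦ F̃(x, α)` is affine and, by the rank condition, vanishes only at `α₀`, the derivative `Dψ`
is injective. By compactness of the simplex, the weights of points of `P_int` near `x` tend to
`α₀`, so near `x` the set `P_int` is the image of `ψ`. Hence the tangent cone of `P_int` at `x`
is the linear subspace `range Dψ`, which is invariant under `v ↦ -v`, and `x` is not in the edge.
-/

open Filter Topology Asymptotics Matrix

theorem Matrix.exists_smul_eq_of_vecMul_eq_zero {R ι m : Type*} [Field R] [Fintype ι] [Fintype m]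
    (M : Matrix ι m R) (hM : M.rank + 1 = Fintype.card ι) {w w' : ι → R} (hw : w ᵥ* M = 0)
    (hw0 : w ≠ 0) (hw' : w' ᵥ* M = 0) : ∃ c : R, c • w = w' := by
  set T := Mᵀ.mulVecLin
  have hker : Module.finrank R (LinearMap.ker T) = 1 := by
    have hrange : Module.finrank R (LinearMap.range T) = M.rank := M.rank_transpose
    have := LinearMap.finrank_range_add_finrank_ker T
    rw [Module.finrank_fintype_fun_eq_card, hrange] at this
    omega
  have hmem : ∀ {v : ι → R}, v ᵥ* M = 0 → v ∈ LinearMap.ker T := fun hv => by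
    rwa [LinearMap.mem_ker, Matrix.mulVecLin_apply, Matrix.mulVec_transpose]
  obtain ⟨c, hc⟩ := (finrank_eq_one_iff_of_nonzero' (⟨w, hmem hw⟩ : LinearMap.ker T)
    (by simpa using hw0)).mp hker ⟨w', hmem hw'⟩
  exact ⟨c, congrArg Subtype.val hc⟩

theorem ContinuousLinearMap.isInvertible_of_isUnit {R M : Type*} [Semiring R] [TopologicalSpace M]
    [AddCommMonoid M] [Module R M] {T : M →L[R] M} (hT : IsUnit T) : T.IsInvertible := by
  obtain ⟨u, rfl⟩ := hT
  exact ⟨ContinuousLinearEquiv.unitsEquiv R M u, rfl⟩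

theorem IsCompact.tendsto_of_unique_zero {X B Z : Type*} [TopologicalSpace X] [TopologicalSpace B]
    [TopologicalSpace Z] [T1Space Z] {F : X × B → Z} (hF : Continuous F) {C : Set B}
    (hC : IsCompact C) {l : Filter X} {x : X} (hl : l ≤ 𝓝 x) {a : X → B} {z : Z}
    (ha : ∀ᶠ y in l, a y ∈ C ∧ F (y, a y) = z) {b₀ : B} (huniq : ∀ b ∈ C, F (x, b) = z → b = b₀) :
    Tendsto a l (𝓝 b₀) := by
  refine hC.tendsto_nhds_of_unique_mapClusterPt (ha.mono fun _ h => h.1)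
    fun b hbC hb => huniq b hbC (by_contra fun hne => ?_)
  obtain ⟨U, hU, V, hV, hUV⟩ :=
    mem_nhds_prod_iff.mp ((isOpen_compl_singleton.preimage hF).mem_nhds hne)
  have hU' : ∀ᶠ y in l, y ∈ U := hl hU
  obtain ⟨y, hyV, hyU, -, hy⟩ := ((hb.frequently hV).and_eventually (hU'.and ha)).exists
  exact hUV (Set.mk_mem_prod hyU hyV) hy

section TangentCone

variable {A E : Type*} [NormedAddCommGroup A] [NormedSpace ℝ A]
  [NormedAddCommGroup E] [NormedSpace ℝ E]

theorem mem_tan_of_tendsto_inv_smul {Y : Set E} {x w : E} {u : ℕ → E} {t : ℕ → ℝ}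
    (ht : ∀ m, 0 < t m) (ht0 : Tendsto t atTop (𝓝 0)) (hY : ∀ᶠ m in atTop, x + u m ∈ Y)
    (hu : Tendsto (fun m => (t m)⁻¹ • u m) atTop (𝓝 w)) : w ∈ Tan Y x := by
  rcases eq_or_ne w 0 with rfl | hw
  · exact Or.inl rfl
  have hu0 : Tendsto u atTop (𝓝 0) := by
    simpa [smul_smul, mul_inv_cancel₀ (ht _).ne'] using ht0.smul hu
  have hdir : Tendsto (fun m => ‖u m‖⁻¹ • u m) atTop (𝓝 (‖w‖⁻¹ • w)) := by
    have hnormalize : ∀ m, ‖u m‖⁻¹ • u m = ‖(t m)⁻¹ • u m‖⁻¹ • ((t m)⁻¹ • u m) := by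
      intro m
      rw [norm_smul, norm_inv, Real.norm_of_nonneg (ht m).le, smul_smul, mul_inv, inv_inv]
      congr 1
      field_simp [(ht m).ne']
    simpa only [hnormalize] using (hu.norm.inv₀ (norm_ne_zero_iff.mpr hw)).smul hu
  have hne : ∀ᶠ m in atTop, u m ≠ 0 :=
    (hu.eventually_ne hw).mono fun m hm hum => hm (by simp [hum])
  obtain ⟨N, hN⟩ := eventually_atTop.mp (hne.and hY)
  have hshift : Tendsto (· + N) atTop atTop := tendsto_add_atTop_nat N
  exact Or.inr ⟨fun m => u (m + N), fun m => (hN _ (Nat.le_add_left N m)).1,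
    hu0.comp hshift, fun m => (hN _ (Nat.le_add_left N m)).2, hdir.comp hshift⟩

theorem range_subset_tan {Y : Set E} {g : A → E} {Dg : A →L[ℝ] E} {a₀ : A}
    (hg : HasFDerivAt g Dg a₀) (hY : ∀ᶠ a in 𝓝 a₀, g a ∈ Y) :
    Set.range Dg ⊆ Tan Y (g a₀) := by
  rintro _ ⟨d, rfl⟩
  have ht : Tendsto (fun m : ℕ => 1 / ((m : ℝ) + 1)) atTop (𝓝[>] 0) :=
    tendsto_nhdsWithin_iff.mpr ⟨tendsto_one_div_add_atTop_nhds_zero_nat,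
      Eventually.of_forall fun m => Set.mem_Ioi.mpr (by positivity)⟩
  refine mem_tan_of_tendsto_inv_smul (t := fun m : ℕ => 1 / ((m : ℝ) + 1))
    (u := fun m => g (a₀ + (1 / ((m : ℝ) + 1)) • d) - g a₀) (fun m => by positivity)
    (tendsto_nhdsWithin_iff.mp ht).1 ?_
    (((hg.hasLineDerivAt d).tendsto_slope_zero_right).comp ht)
  have hline : Tendsto (fun t : ℝ => a₀ + t • d) (𝓝[>] 0) (𝓝 a₀) := by
    have : Continuous (fun t : ℝ => a₀ + t • d) := by fun_prop
    simpa using (this.tendsto 0).mono_left nhdsWithin_le_nhds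
  filter_upwards [(hline.comp ht).eventually hY] with m hm
  simpa using hm

theorem tan_subset_range [FiniteDimensional ℝ A] {Y : Set E} {g : A → E} {Dg : A →L[ℝ] E}
    {a₀ : A} (hg : HasFDerivAt g Dg a₀) (hinj : Function.Injective Dg) {a : E → A}
    (ha : Tendsto a (𝓝[Y] (g a₀)) (𝓝 a₀)) (hga : ∀ᶠ y in 𝓝[Y] (g a₀), g (a y) = y) :
    Tan Y (g a₀) ⊆ Set.range Dg := by
  intro v hv
  rcases eq_or_ne v 0 with rfl | hv0
  · exact ⟨0, map_zero Dg⟩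
  obtain ⟨u, -, hu, huY, hdir⟩ := hv.resolve_left hv0
  obtain ⟨C, -, hC⟩ := (Dg : A →ₗ[ℝ] E).exists_antilipschitzWith (LinearMap.ker_eq_bot.mpr hinj)
  have hequiv : (fun b => g b - g a₀) ~[𝓝 a₀] fun b => Dg (b - a₀) :=
    hg.isLittleO.trans_isBigO (isBigO_iff.mpr ⟨C, Eventually.of_forall fun b => by
      simpa using hC.le_mul_dist (b - a₀) 0⟩)
  have hyY : Tendsto (fun m => g a₀ + u m) atTop (𝓝[Y] (g a₀)) :=
    tendsto_nhdsWithin_iff.mpr ⟨by simpa using tendsto_const_nhds.add hu, .of_forall huY⟩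
  set b := fun m => a (g a₀ + u m)
  have hgb : ∀ᶠ m in atTop, g (b m) - g a₀ = u m := by
    filter_upwards [hyY.eventually hga] with m hm
    simp [b, hm]
  have herr : (fun m => Dg (b m - a₀) - u m) =o[atTop] u :=
    ((hequiv.symm.isLittleO.comp_tendsto (ha.comp hyY)).congr'
      (hgb.mono fun m hm => by simp [b, hm]) hgb)
  have hlim : Tendsto (fun m => Dg (‖u m‖⁻¹ • (b m - a₀))) atTop (𝓝 (‖v‖⁻¹ • v)) := by
    have hsmall : Tendsto (fun m => ‖u m‖⁻¹ • (Dg (b m - a₀) - u m)) atTop (𝓝 0) := by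
      rw [tendsto_zero_iff_norm_tendsto_zero]
      refine herr.norm_norm.tendsto_div_nhds_zero.congr fun m => ?_
      rw [norm_smul, norm_inv, norm_norm, div_eq_inv_mul]
    simpa [smul_sub] using hdir.add hsmall
  have hclosed : IsClosed (Set.range Dg) := by
    simpa [LinearMap.coe_range] using (LinearMap.range (Dg : A →ₗ[ℝ] E)).closed_of_finiteDimensional
  obtain ⟨d, hd⟩ := hclosed.mem_of_tendsto hlim (.of_forall fun m => ⟨_, rfl⟩)
  refine ⟨‖v‖ • d, ?_⟩
  rw [map_smul, hd, smul_smul, mul_inv_cancel₀ (norm_ne_zero_iff.mpr hv0), one_smul]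

theorem tan_eq_range [FiniteDimensional ℝ A] {Y : Set E} {g : A → E} {Dg : A →L[ℝ] E} {a₀ : A}
    (hg : HasFDerivAt g Dg a₀) (hinj : Function.Injective Dg) (hY : ∀ᶠ a in 𝓝 a₀, g a ∈ Y)
    {a : E → A} (ha : Tendsto a (𝓝[Y] (g a₀)) (𝓝 a₀)) (hga : ∀ᶠ y in 𝓝[Y] (g a₀), g (a y) = y) :
    Tan Y (g a₀) = Set.range Dg :=
  (tan_subset_range hg hinj ha hga).antisymm (range_subset_tan hg hY)

end TangentCone

theorem isOpen_openSimplex (K : ℕ) : IsOpen (openSimplex K) := by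
  rw [openSimplex, Set.ofPred_and, Set.ofPred_forall]
  exact (isOpen_iInter_of_finite fun i => isOpen_lt continuous_const (continuous_apply i)).inter
    (isOpen_lt (continuous_finsetSum _ fun i _ => continuous_apply i) continuous_const)

theorem openSimplex_subset_closedSimplex (K : ℕ) : openSimplex K ⊆ closedSimplex K :=
  fun _ ⟨hpos, hsum⟩ => ⟨fun i => (hpos i).le, hsum.le⟩

theorem isCompact_closedSimplex (K : ℕ) : IsCompact (closedSimplex K) := by
  have hclosed : IsClosed (closedSimplex K) := by
    rw [closedSimplex, Set.ofPred_and, Set.ofPred_forall]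
    exact (isClosed_iInter fun i => isClosed_le continuous_const (continuous_apply i)).inter
      (isClosed_le (continuous_finsetSum _ fun i _ => continuous_apply i) continuous_const)
  refine (isCompact_Icc (a := 0) (b := 1)).of_isClosed_subset hclosed ?_
  rintro α ⟨hnonneg, hsum⟩
  refine ⟨hnonneg, fun i => ?_⟩
  exact (Finset.single_le_sum (fun j _ => hnonneg j) (Finset.mem_univ i)).trans hsum

section Ftilde

variable {n K : ℕ} {f : Fin (K + 1) → (Fin n → ℝ) → ℝ}

theorem contDiff_grad {m : WithTop ℕ∞} {g : (Fin n → ℝ) → ℝ} (hg : ContDiff ℝ (m + 1) g) :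
    ContDiff ℝ m (grad n g) :=
  contDiff_pi.mpr fun _ => (hg.fderiv_right le_rfl).clm_apply contDiff_const

theorem contDiff_ftilde {m : WithTop ℕ∞} (hf : ∀ i, ContDiff ℝ (m + 1) (f i)) :
    ContDiff ℝ m (Ftilde n K f) := by
  have hgrad : ∀ i, ContDiff ℝ m fun p : (Fin n → ℝ) × (Fin K → ℝ) => grad n (f i) p.1 :=
    fun i => (contDiff_grad (hf i)).comp contDiff_fst
  refine .add (.sum fun i _ => .smul (f := fun p => p.2 i) ?_ ((hgrad _).sub (hgrad _))) (hgrad _)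
  exact contDiff_pi.mp contDiff_snd i

theorem ftilde_eq_vecMul (x : Fin n → ℝ) (α : Fin K → ℝ) :
    Ftilde n K f (x, α) = Fin.snoc α (1 - ∑ i, α i) ᵥ* Jac n (K + 1) f x := by
  rw [vecMul_eq_sum, Fin.sum_univ_castSucc]
  simp only [Ftilde, Fin.snoc_castSucc, Fin.snoc_last, smul_sub, sub_smul, one_smul,
    Finset.sum_sub_distrib, ← Finset.sum_smul]
  change _ = ∑ i : Fin K, α i • grad n (f i.castSucc) x
    + (grad n (f (Fin.last K)) x - (∑ i, α i) • grad n (f (Fin.last K)) x)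
  abel

theorem ftilde_add_smul (x : Fin n → ℝ) (α d : Fin K → ℝ) (t : ℝ) :
    Ftilde n K f (x, α + t • d) =
      Ftilde n K f (x, α) + t • (Ftilde n K f (x, α + d) - Ftilde n K f (x, α)) := by
  simp only [Ftilde, Pi.add_apply, Pi.smul_apply, smul_eq_mul, add_smul, mul_smul,
    Finset.sum_add_distrib, ← Finset.smul_sum]
  module

theorem eq_of_ftilde_eq_zero {x : Fin n → ℝ} (hrk : (Jac n (K + 1) f x).rank = K)
    {α α' : Fin K → ℝ} (h : Ftilde n K f (x, α) = 0) (h' : Ftilde n K f (x, α') = 0) :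
    α = α' := by
  rw [ftilde_eq_vecMul] at h h'
  have hsum : ∀ β : Fin K → ℝ, ∑ i, (Fin.snoc β (1 - ∑ j, β j) : Fin (K + 1) → ℝ) i = 1 := by
    intro β
    simp [Fin.sum_univ_castSucc]
  have hw0 : (Fin.snoc α (1 - ∑ j, α j) : Fin (K + 1) → ℝ) ≠ 0 := fun h0 => by
    simpa [h0] using hsum α
  obtain ⟨c, hc⟩ := (Jac n (K + 1) f x).exists_smul_eq_of_vecMul_eq_zero (by simp [hrk]) h hw0 h'
  have hc1 : c = 1 := by simpa [← hc, ← Finset.mul_sum, hsum] using hsum α'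
  funext i
  simpa [hc1] using congrFun hc i.castSucc

theorem injective_of_hasFDerivAt_ftilde_snd {x : Fin n → ℝ} (hrk : (Jac n (K + 1) f x).rank = K)
    {α : Fin K → ℝ} (h0 : Ftilde n K f (x, α) = 0) {L : (Fin K → ℝ) →L[ℝ] (Fin n → ℝ)}
    (hL : HasFDerivAt (fun β => Ftilde n K f (x, β)) L α) : Function.Injective L := by
  refine (injective_iff_map_eq_zero L).mpr fun d hd => ?_
  have hline : HasLineDerivAt ℝ (fun β => Ftilde n K f (x, β))
      (Ftilde n K f (x, α + d) - Ftilde n K f (x, α)) α d := by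
    simp only [HasLineDerivAt, ftilde_add_smul]
    simpa using ((hasDerivAt_id (0 : ℝ)).smul_const _).const_add (Ftilde n K f (x, α))
  have hzero : Ftilde n K f (x, α + d) = 0 := by
    simpa [h0, hd, eq_comm] using (hL.hasLineDerivAt d).unique hline
  simpa using eq_of_ftilde_eq_zero hrk hzero h0

end Ftilde

theorem exists_tan_paretoCriticalInt_eq_range {n K : ℕ} {f : Fin (K + 1) → (Fin n → ℝ) → ℝ}
    (hf : ∀ i, ContDiff ℝ 2 (f i)) {x : Fin n → ℝ} {α₀ : Fin K → ℝ} (hα₀ : α₀ ∈ openSimplex K)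
    (hx : Ftilde n K f (x, α₀) = 0) (hreg : IsUnit (DxFtilde n K f (x, α₀)))
    (hrk : (Jac n (K + 1) f x).rank = K) :
    ∃ D : (Fin K → ℝ) →L[ℝ] (Fin n → ℝ), Tan (ParetoCriticalInt n K f) x = Set.range D := by
  have hF : ContDiff ℝ 1 (Ftilde n K f) := contDiff_ftilde hf
  -- The implicit function theorem in Mathlib solves for the second component, hence the swap.
  set G := fun q : (Fin K → ℝ) × (Fin n → ℝ) => Ftilde n K f (q.2, q.1)
  have hG : HasStrictFDerivAt G (fderiv ℝ G (α₀, x)) (α₀, x) :=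
    (hF.comp (contDiff_snd.prodMk contDiff_fst)).contDiffAt.hasStrictFDerivAt one_ne_zero
  set G' := fderiv ℝ G (α₀, x)
  have hGx : G' ∘L .inr ℝ _ _ = DxFtilde n K f (x, α₀) :=
    (hG.hasFDerivAt.comp x (hasFDerivAt_prodMk_right α₀ x)).fderiv.symm
  have hGα : HasFDerivAt (fun β => Ftilde n K f (x, β)) (G' ∘L .inl ℝ _ _) α₀ :=
    (hG.hasFDerivAt.comp α₀ (hasFDerivAt_prodMk_left (𝕜 := ℝ) α₀ x) :)
  have hinv : (G' ∘L .inr ℝ _ _).IsInvertible :=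
    hGx ▸ ContinuousLinearMap.isInvertible_of_isUnit hreg
  set ψ := hG.implicitFunctionOfProdDomain hinv
  have hiff := hG.eventually_apply_eq_iff_implicitFunctionOfProdDomain hinv
  have hψx : ψ α₀ = x := hiff.self_of_nhds.mp rfl
  choose! a ha using fun y (hy : y ∈ ParetoCriticalInt n K f) => hy
  have hta : Tendsto a (𝓝[ParetoCriticalInt n K f] x) (𝓝 α₀) :=
    (isCompact_closedSimplex K).tendsto_of_unique_zero hF.continuous nhdsWithin_le_nhds
      (eventually_nhdsWithin_of_forall fun y hy =>
        ⟨openSimplex_subset_closedSimplex K (ha y hy).1, (ha y hy).2⟩)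
      fun β _ hβ => eq_of_ftilde_eq_zero hrk hβ hx
  have hga : ∀ᶠ y in 𝓝[ParetoCriticalInt n K f] x, ψ (a y) = y := by
    filter_upwards [(hta.prodMk_nhds (tendsto_id.mono_left nhdsWithin_le_nhds)).eventually hiff,
      self_mem_nhdsWithin] with y hy hyP
    exact hy.mp (by simpa [G, hx] using (ha y hyP).2)
  have hmem : ∀ᶠ β in 𝓝 α₀, ψ β ∈ ParetoCriticalInt n K f := by
    filter_upwards [hG.eventually_apply_implicitFunctionOfProdDomain hinv,
      (isOpen_openSimplex K).mem_nhds hα₀] with β hβ hβs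
    exact ⟨β, hβs, by simpa [G, hx] using hβ⟩
  rw [← hψx] at hta hga ⊢
  exact ⟨_, tan_eq_range (hG.hasStrictFDerivAt_implicitFunctionOfProdDomain hinv).hasFDerivAt
    ((neg_injective.comp hinv.inverse.injective).comp
      (injective_of_hasFDerivAt_ftilde_snd hrk hx hGα)) hmem hta hga⟩

theorem edge_subset_P0_general (n K : ℕ)
    (f : Fin (K + 1) → (Fin n → ℝ) → ℝ) (hf : ∀ i, ContDiff ℝ 3 (f i))
    (hreg : ∀ p : (Fin n → ℝ) × (Fin K → ℝ),
      p.2 ∈ openSimplex K → Ftilde n K f p = 0 → IsUnit (DxFtilde n K f p))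
    (hrank : ∀ x ∈ ParetoCriticalInt n K f, (Jac n (K + 1) f x).rank = K) :
    ParetoEdge n K f ⊆ ParetoCritical n K f \ ParetoCriticalInt n K f := by
  rintro x ⟨hxP, hasym⟩
  refine ⟨hxP, fun ⟨α₀, hα₀, hx⟩ => hasym ?_⟩
  obtain ⟨D, hD⟩ := exists_tan_paretoCriticalInt_eq_range (fun i => (hf i).of_le (by norm_num))
    hα₀ hx (hreg (x, α₀) hα₀ hx) (hrank x ⟨α₀, hα₀, hx⟩)
  have hneg : Neg.neg ∘ D = D ∘ Neg.neg := funext fun d => (map_neg D d).symm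
  rw [hD, ← Set.range_comp, hneg, neg_surjective.range_comp]

/-- under the regularity assumptions and `rank Df(x) = k - 1` on `P_int`,
the edge `P_E` is contained in `P_0 = P \ P_int`. -/
theorem edge_subset_P0 (n K : ℕ) (hK : 0 < K)
    (f : Fin (K + 1) → (Fin n → ℝ) → ℝ) (hf : ∀ i, ContDiff ℝ 3 (f i))
    (hreg : ∀ p : (Fin n → ℝ) × (Fin K → ℝ),
      p.2 ∈ openSimplex K → Ftilde n K f p = 0 → IsUnit (DxFtilde n K f p))
    (hrank : ∀ x ∈ ParetoCriticalInt n K f, (Jac n (K + 1) f x).rank = K) :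
    ParetoEdge n K f ⊆ ParetoCritical n K f \ ParetoCriticalInt n K f :=
  edge_subset_P0_general n K f hf hreg hrank
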